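/- arXiv:2008.01760 — 2 statements merged into one kernel-verified Lean document; each statement's English description precedes it below -/
import Mathlib

section
/- Let $D_1,\dots,D_p > 0$ and $\lambda \ge 0$. The minimizer of $g(w) = \sum_{l=1}^p (w_l^2 + \lambda w_l) D_l$ over the simplex $\{w \in \mathbb{R}^p : w_l \ge 0, \sum_l w_l = 1\}$ is given componentwise by $w_l^* = \frac{1}{2}\max(\alpha^*/D_l - \lambda, 0)$, where $\alpha^* > 0$ is the unique solution of $\sum_{l=1}^p \frac{1}{2}\max(\alpha/D_l - \lambda, 0) = 1$. -/
/-!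
The cost `x ↦ (x² + λx) D_l` is convex on `[0, ∞)`, and the water-filling value
`v_l = ½ max(α/D_l - λ, 0)` is exactly the point where the common slope `α` supports it: the
derivative `(2v_l + λ) D_l` equals `α` when `v_l > 0`, and is `λ D_l ≥ α` when `v_l = 0`.
Summing the supporting-line inequalities, the slope terms `α (w_l - v_l)` cancel on the simplex.
-/

open Finset

theorem sum_le_sum_of_common_slope {ι : Type*} [Fintype ι] (f : ι → ℝ → ℝ) (v w : ι → ℝ)
    (α : ℝ) (hslope : ∀ l, f l (v l) + α * (w l - v l) ≤ f l (w l))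
    (hsum : ∑ l, w l = ∑ l, v l) :
    ∑ l, f l (v l) ≤ ∑ l, f l (w l) :=
  calc ∑ l, f l (v l) = ∑ l, (f l (v l) + α * (w l - v l)) := by
        rw [sum_add_distrib, ← mul_sum, sum_sub_distrib, hsum, sub_self, mul_zero, add_zero]
    _ ≤ ∑ l, f l (w l) := sum_le_sum fun l _ => hslope l

noncomputable def waterFill (α D lam : ℝ) : ℝ := 1 / 2 * max (α / D - lam) 0

theorem waterFill_nonneg (α D lam : ℝ) : 0 ≤ waterFill α D lam := by
  unfold waterFill; positivity

theorem cost_waterFill_add_mul_sub_le {D : ℝ} (hD : 0 < D) (α lam : ℝ) {x : ℝ} (hx : 0 ≤ x) :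
    (waterFill α D lam ^ 2 + lam * waterFill α D lam) * D + α * (x - waterFill α D lam)
      ≤ (x ^ 2 + lam * x) * D := by
  set v := waterFill α D lam with hv
  rcases le_or_gt (α / D - lam) 0 with h | h
  · have hv0 : v = 0 := by simp [hv, waterFill, max_eq_right h]
    have hα : α ≤ lam * D := (div_le_iff₀ hD).mp (by linarith)
    rw [hv0]
    nlinarith [mul_nonneg (sq_nonneg x) hD.le]
  · have hα : α = (2 * v + lam) * D := by
      simp only [hv, waterFill, max_eq_left h.le]
      field_simp
      ring
    rw [hα]
    nlinarith [mul_nonneg (sq_nonneg (x - v)) hD.le]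

theorem stmt_0_general {p : ℕ} (D : Fin p → ℝ) (hD : ∀ l, 0 < D l) (lam : ℝ)
    (αs : ℝ)
    (hroot : ∑ l, (1 / 2) * max (αs / D l - lam) 0 = 1) :
    (∀ l, 0 ≤ (1 / 2) * max (αs / D l - lam) 0) ∧
    (∑ l, (1 / 2) * max (αs / D l - lam) 0 = 1) ∧
    (∀ w : Fin p → ℝ, (∀ l, 0 ≤ w l) → (∑ l, w l = 1) →
      ∑ l, (((1 / 2) * max (αs / D l - lam) 0) ^ 2
              + lam * ((1 / 2) * max (αs / D l - lam) 0)) * D l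
        ≤ ∑ l, ((w l) ^ 2 + lam * w l) * D l) :=
  ⟨fun l => waterFill_nonneg αs (D l) lam, hroot, fun w hw hsum =>
    sum_le_sum_of_common_slope (fun l x => (x ^ 2 + lam * x) * D l)
      (fun l => waterFill αs (D l) lam) w αs
      (fun l => cost_waterFill_add_mul_sub_le (hD l) αs lam (hw l)) (hsum.trans hroot.symm)⟩

/-- The minimizer of `g(w) = ∑ (w_l² + λ w_l) D_l` over the probability simplex is
`w_l* = (1/2) max(α*/D_l - λ, 0)` where `α* > 0` uniquely solves
`∑ (1/2) max(α/D_l - λ, 0) = 1`. -/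
theorem stmt_0 {p : ℕ} (D : Fin p → ℝ) (hD : ∀ l, 0 < D l) (lam : ℝ) (hlam : 0 ≤ lam)
    (αs : ℝ) (hαs : 0 < αs)
    (hroot : ∑ l, (1 / 2) * max (αs / D l - lam) 0 = 1)
    (huniq : ∀ α : ℝ, 0 < α → (∑ l, (1 / 2) * max (α / D l - lam) 0 = 1) → α = αs) :
    (∀ l, 0 ≤ (1 / 2) * max (αs / D l - lam) 0) ∧
    (∑ l, (1 / 2) * max (αs / D l - lam) 0 = 1) ∧
    (∀ w : Fin p → ℝ, (∀ l, 0 ≤ w l) → (∑ l, w l = 1) →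
      ∑ l, (((1 / 2) * max (αs / D l - lam) 0) ^ 2
              + lam * ((1 / 2) * max (αs / D l - lam) 0)) * D l
        ≤ ∑ l, ((w l) ^ 2 + lam * w l) * D l) :=
  stmt_0_general D hD lam αs hroot
end

section
/- Fix $w$ with all $w_l > 0$, $\lambda \ge 0$, $\gamma > 0$, and nonnegative affinities $\phi_{ij}$. The stationarity condition $\partial f / \partial \mu_{il} = 0$ for the objective $f(\mu) = \sum_{i,l} (w_l^2 + \lambda w_l)(x_{il}-\mu_{il})^2 + \gamma \sum_{i \ne j} \phi_{ij} \sum_l (\mu_{il}-\mu_{jl})^2$ is equivalent to $\mu_{il} = \frac{\gamma \sum_{j \ne i} (\phi_{ij} + \phi_{ji}) \mu_{jl} + (w_l^2 + \lambda w_l) x_{il}}{\gamma \sum_{j \ne i} (\phi_{ij} + \phi_{ji}) + w_l^2 + \lambda w_l}$. -/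
/-!
Along the line that moves only the coordinate `μ i l`, the fidelity term has derivative
`2 c_l (μ_il - x_il)` and each pair of fusion terms `(i, j)`, `(j, i)` has derivative
`2 (φ_ij + φ_ji) (μ_il - μ_jl)`. The stationarity condition is therefore linear in `μ_il`, with
leading coefficient `γ ∑_{j ≠ i} (φ_ij + φ_ji) + w_l² + λ w_l > 0`, and solving it gives the
update.
-/

open Finset Function

section
variable {ι κ : Type*} [DecidableEq ι] [DecidableEq κ]

lemma hasDerivAt_update_update_apply (μ : ι → κ → ℝ) (i : ι) (l : κ) (i' : ι) (l' : κ)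
    (t : ℝ) :
    HasDerivAt (fun s => update μ i (update (μ i) l s) i' l')
      (if i' = i ∧ l' = l then 1 else 0) t := by
  by_cases hi : i' = i
  · subst hi
    by_cases hl : l' = l
    · subst hl; simpa using hasDerivAt_id' t
    · simpa [hl] using hasDerivAt_const t (μ i' l')
  · simpa [hi] using hasDerivAt_const t (μ i' l')

lemma sum_sum_offDiag_sub_ite [Fintype ι] (f : ι → ι → ℝ) (i : ι) :
    ∑ i', ∑ j, (if i' ≠ j then f i' j * ((if i' = i then 1 else 0) - (if j = i then 1 else 0))
      else 0) = ∑ j, if j ≠ i then f i j - f j i else 0 := by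
  have hsplit (i' j : ι) :
      (if i' ≠ j then f i' j * ((if i' = i then 1 else 0) - (if j = i then 1 else 0)) else 0)
        = (if i' = i then (if i' ≠ j then f i' j else 0) else 0)
          - (if j = i then (if i' ≠ j then f i' j else 0) else 0) := by
    split_ifs <;> simp_all
  simp only [hsplit, sum_sub_distrib]
  rw [sum_comm (f := fun i' j => if j = i then (if i' ≠ j then f i' j else 0) else 0)]
  simp only [sum_ite_irrel, sum_const_zero, sum_ite_eq', mem_univ, if_true, ← sum_sub_distrib]
  refine sum_congr rfl fun j _ => ?_
  split_ifs <;> simp_all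

lemma hasDerivAt_sum_sum_mul_sub_update_sq [Fintype ι] [Fintype κ] (c : κ → ℝ)
    (x μ : ι → κ → ℝ) (i : ι) (l : κ) :
    HasDerivAt (fun t => ∑ i', ∑ l', c l' * (x i' l' - update μ i (update (μ i) l t) i' l') ^ 2)
      (2 * c l * (μ i l - x i l)) (μ i l) := by
  have h := HasDerivAt.fun_sum (u := univ) fun i' _ => HasDerivAt.fun_sum (u := univ) fun l' _ =>
    (((hasDerivAt_update_update_apply μ i l i' l' (μ i l)).const_sub (x i' l')).pow 2).const_mul
      (c l')
  refine h.congr_deriv ?_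
  simp only [Nat.cast_ofNat, update_eq_self, Nat.add_one_sub_one, pow_one, ite_and, mul_neg,
    mul_ite, mul_one, mul_zero, sum_neg_distrib, sum_ite_irrel, sum_ite_eq', mem_univ, ↓reduceIte,
    sum_const_zero]
  ring

lemma hasDerivAt_sum_sum_offDiag_update_sq [Fintype ι] [Fintype κ] (φ : ι → ι → ℝ)
    (μ : ι → κ → ℝ) (i : ι) (l : κ) :
    HasDerivAt (fun t => ∑ i', ∑ j, if i' ≠ j then
        φ i' j * ∑ l',
          (update μ i (update (μ i) l t) i' l' - update μ i (update (μ i) l t) j l') ^ 2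
        else 0)
      (2 * ∑ j, if j ≠ i then (φ i j + φ j i) * (μ i l - μ j l) else 0) (μ i l) := by
  have hsummand (i' j : ι) : HasDerivAt (fun t => if i' ≠ j then
      φ i' j * ∑ l', (update μ i (update (μ i) l t) i' l' - update μ i (update (μ i) l t) j l') ^ 2
      else 0)
      (if i' ≠ j then φ i' j * (2 * (μ i' l - μ j l)) *
        ((if i' = i then 1 else 0) - if j = i then 1 else 0) else 0) (μ i l) := by
    by_cases hij : i' ≠ j
    · simp only [if_pos hij]
      refine ((HasDerivAt.fun_sum (u := univ) fun l' _ =>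
        ((hasDerivAt_update_update_apply μ i l i' l' (μ i l)).sub
          (hasDerivAt_update_update_apply μ i l j l' (μ i l))).pow 2).const_mul
        (φ i' j)).congr_deriv ?_
      simp [update_eq_self, ite_and, mul_sub, mul_ite, sum_sub_distrib, sum_ite_irrel]
    · simpa only [if_neg hij] using hasDerivAt_const (μ i l) (0 : ℝ)
  refine (HasDerivAt.fun_sum fun i' _ => HasDerivAt.fun_sum fun j _ => hsummand i' j).congr_deriv ?_
  rw [sum_sum_offDiag_sub_ite (fun i' j => φ i' j * (2 * (μ i' l - μ j l))), mul_sum]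
  refine sum_congr rfl fun j _ => ?_
  split_ifs <;> ring
end

/-- The stationarity condition `∂f/∂μ_{il} = 0` for the biconvex clustering objective in `μ`
is equivalent to the closed-form centroid update. -/
theorem stmt_7 {n p : ℕ} (x μ : Fin n → Fin p → ℝ) (w : Fin p → ℝ) (hw : ∀ l, 0 < w l)
    (lam : ℝ) (hlam : 0 ≤ lam) (γ : ℝ) (hγ : 0 < γ)
    (φ : Fin n → Fin n → ℝ) (hφ : ∀ i j, 0 ≤ φ i j) (i : Fin n) (l : Fin p) :
    (deriv (fun t : ℝ =>
        (∑ i', ∑ l', ((w l') ^ 2 + lam * w l') *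
            (x i' l' - Function.update μ i (Function.update (μ i) l t) i' l') ^ 2)
          + γ * ∑ i', ∑ j, (if i' ≠ j then
              φ i' j * ∑ l', (Function.update μ i (Function.update (μ i) l t) i' l'
                - Function.update μ i (Function.update (μ i) l t) j l') ^ 2 else 0))
        (μ i l) = 0)
    ↔ μ i l =
        (γ * (∑ j, if j ≠ i then (φ i j + φ j i) * μ j l else 0)
            + ((w l) ^ 2 + lam * w l) * x i l)
          / (γ * (∑ j, if j ≠ i then φ i j + φ j i else 0) + (w l) ^ 2 + lam * w l) := by
  rw [((hasDerivAt_sum_sum_mul_sub_update_sq (fun l' => w l' ^ 2 + lam * w l') x μ i l).fun_add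
    ((hasDerivAt_sum_sum_offDiag_update_sq φ μ i l).const_mul γ)).deriv]
  have hS : 0 ≤ ∑ j, if j ≠ i then φ i j + φ j i else 0 :=
    sum_nonneg fun j _ => by
      split_ifs
      exacts [add_nonneg (hφ i j) (hφ j i), le_rfl]
  have hden : 0 < γ * (∑ j, if j ≠ i then φ i j + φ j i else 0) + w l ^ 2 + lam * w l :=
    add_pos_of_pos_of_nonneg (add_pos_of_nonneg_of_pos (mul_nonneg hγ.le hS) (pow_pos (hw l) 2))
      (mul_nonneg hlam (hw l).le)
  have hfusion : (∑ j, if j ≠ i then (φ i j + φ j i) * (μ i l - μ j l) else 0)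
      = (∑ j, if j ≠ i then φ i j + φ j i else 0) * μ i l
        - ∑ j, if j ≠ i then (φ i j + φ j i) * μ j l else 0 := by
    rw [sum_mul, ← sum_sub_distrib]
    exact sum_congr rfl fun j _ => by split_ifs <;> ring
  rw [eq_div_iff hden.ne', hfusion]
  constructor <;> intro h <;> linarith
end
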